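/- The symmetric 2×2 matrices Σ₀ = [[-21/38, 0],[0, -1/2]], Σ₁ = [[-15463/1026, -955/108],[-955/108, -11/2]], and Σ₂ = [[-21/38, -35/108],[-35/108, -143/54]] are all negative definite, and the largest eigenvalue among all eigenvalues of Σ₀, Σ₁, Σ₂ equals λ* = -10553/1026 + 5√17026937/2052, which satisfies λ* ≤ -0.231. -/

import Mathlib

noncomputable def Sig0 : Matrix (Fin 2) (Fin 2) ℝ := !![-21/38, 0; 0, -1/2]
noncomputable def Sig1 : Matrix (Fin 2) (Fin 2) ℝ :=
  !![-15463/1026, -955/108; -955/108, -11/2]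
noncomputable def Sig2 : Matrix (Fin 2) (Fin 2) ℝ :=
  !![-21/38, -35/108; -35/108, -143/54]

noncomputable def lamStar : ℝ := -10553 / 1026 + 5 * Real.sqrt 17026937 / 2052

/-!
A 2×2 matrix `[[a, b], [c, d]]` has `μ` as an eigenvalue iff `(μ - a)(μ - d) = bc`, so `t`
bounds every eigenvalue as soon as `a, d ≤ t` and `bc ≤ (t - a)(t - d)` (the product
`(μ - a)(μ - d)` is increasing in `μ` beyond `max a d`). `λ*` is the larger root of this
equation for `Σ₁`, and `λ* ≥ -1/2` is enough for it to dominate the eigenvalues of `Σ₀` and `Σ₂`.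
-/

namespace Matrix

variable {K : Type*} [Field K]

theorem mem_spectrum_fin_two_iff {a b c d μ : K} :
    μ ∈ spectrum K !![a, b; c, d] ↔ (μ - a) * (μ - d) = b * c := by
  rw [spectrum.mem_iff, isUnit_iff_isUnit_det, isUnit_iff_ne_zero, not_not,
    Algebra.algebraMap_eq_smul_one, det_fin_two, sub_eq_zero]
  simp

variable [LinearOrder K] [IsStrictOrderedRing K]

theorem le_of_mem_spectrum_fin_two {a b c d μ t : K} (hμ : μ ∈ spectrum K !![a, b; c, d])
    (ha : a ≤ t) (hd : d ≤ t) (hdet : b * c ≤ (t - a) * (t - d)) : μ ≤ t := by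
  by_contra! ht
  have := mul_lt_mul'' (sub_lt_sub_right ht a) (sub_lt_sub_right ht d) (sub_nonneg.2 ha)
    (sub_nonneg.2 hd)
  linarith [mem_spectrum_fin_two_iff.1 hμ]

variable [StarRing K] [TrivialStar K]

theorem posDef_fin_two {a b d : K} (ha : 0 < a) (hdet : 0 < a * d - b * b) :
    (!![a, b; b, d]).PosDef := by
  refine posDef_iff_dotProduct_mulVec.mpr ⟨?_, fun v hv ↦ ?_⟩
  · ext i j
    fin_cases i <;> fin_cases j <;> simp
  have hq : star v ⬝ᵥ (!![a, b; b, d] *ᵥ v) = a * v 0 ^ 2 + 2 * b * v 0 * v 1 + d * v 1 ^ 2 := by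
    simp only [star_trivial, dotProduct, mulVec, Fin.sum_univ_two, of_apply, cons_val',
      cons_val_zero, cons_val_one, empty_val', cons_val_fin_one]
    ring
  refine hq ▸ pos_of_mul_pos_right ?_ ha.le
  have hsq : a * (a * v 0 ^ 2 + 2 * b * v 0 * v 1 + d * v 1 ^ 2)
      = (a * v 0 + b * v 1) ^ 2 + (a * d - b * b) * v 1 ^ 2 := by ring
  rw [hsq]
  by_cases h1 : v 1 = 0
  · have h0 : v 0 ≠ 0 := fun h0 ↦ hv (funext fun i ↦ by fin_cases i <;> assumption)
    simp only [h1, mul_zero, add_zero, zero_pow two_ne_zero]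
    positivity
  · exact add_pos_of_nonneg_of_pos (sq_nonneg _) (mul_pos hdet (by positivity))

theorem posDef_neg_fin_two {a b d : K} (ha : a < 0) (hdet : 0 < a * d - b * b) :
    (-!![a, b; b, d]).PosDef := by
  have hneg : -!![a, b; b, d] = !![-a, -b; -b, -d] := by
    ext i j
    fin_cases i <;> fin_cases j <;> rfl
  exact hneg ▸ posDef_fin_two (neg_pos.2 ha) (by linarith)

end Matrix

open Matrix

lemma neg_half_le_lamStar : -1 / 2 ≤ lamStar := by
  have : (4016 : ℝ) ≤ √17026937 := Real.le_sqrt_of_sq_le (by norm_num)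
  unfold lamStar
  linarith

lemma lamStar_le : lamStar ≤ -0.231 := by
  have : √17026937 ≤ (4126.3976 : ℝ) := Real.sqrt_le_iff.2 ⟨by norm_num, by norm_num⟩
  unfold lamStar
  linarith

lemma lamStar_mem_spectrum_Sig1 : lamStar ∈ spectrum ℝ Sig1 := by
  have hsq : √17026937 ^ 2 = (17026937 : ℝ) := Real.sq_sqrt (by norm_num)
  rw [Sig1, mem_spectrum_fin_two_iff, lamStar]
  linear_combination (25 / 2052 ^ 2 : ℝ) * hsq

/-- `Σ₀, Σ₁, Σ₂` are negative definite, and the largest of all their eigenvalues is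
`λ* = -10553/1026 + 5√17026937/2052 ≤ -0.231`. -/
theorem stmt12 :
    (-Sig0).PosDef ∧ (-Sig1).PosDef ∧ (-Sig2).PosDef ∧
    lamStar ∈ spectrum ℝ Sig0 ∪ spectrum ℝ Sig1 ∪ spectrum ℝ Sig2 ∧
    (∀ μ ∈ spectrum ℝ Sig0 ∪ spectrum ℝ Sig1 ∪ spectrum ℝ Sig2, μ ≤ lamStar) ∧
    lamStar ≤ -0.231 := by
  refine ⟨posDef_neg_fin_two (by norm_num) (by norm_num),
    posDef_neg_fin_two (by norm_num) (by norm_num),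
    posDef_neg_fin_two (by norm_num) (by norm_num),
    Or.inl (Or.inr lamStar_mem_spectrum_Sig1), ?_, lamStar_le⟩
  have hlam := neg_half_le_lamStar
  rintro μ ((h0 | h1) | h2)
  · exact le_of_mem_spectrum_fin_two h0 (by linarith) (by linarith) (by nlinarith)
  · exact le_of_mem_spectrum_fin_two h1 (by linarith) (by linarith)
      (mem_spectrum_fin_two_iff.1 lamStar_mem_spectrum_Sig1).ge
  · exact le_of_mem_spectrum_fin_two h2 (by linarith) (by linarith) (by nlinarith)
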